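/- arXiv:math/9812068 — 2 statements merged into one kernel-verified Lean document; each statement's English description precedes it below -/
import Mathlib

section
/- If μ and λ are integers (with the relevant denominators nonzero) satisfying both 1/|6μ-λ| + 1/|6μ+λ| < 1 failing and 1/|9μ+λ| + 1/|2λ| + 1/|9μ-λ| < 1 failing, i.e. both inequalities hold with ≥ 1, and gcd(μ,λ)=1, then μ = 0. -/
/-!
Since `1 / n ≤ 1 / 2` for every integer `n ≠ 1` (with `1 / 0 = 0`), the first inequality forces
`|6μ - l| = 1`, `|6μ + l| = 1`, or both to equal `2`; the last case gives `12μ = 0` or `6μ = ±2`.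
If, say, `|6μ - l| = 1` and `μ ≠ 0`, then `|9μ + l|` and `|2l|` are at least `5`, so the second
inequality forces `|9μ - l| = 1`; subtracting, `|3μ| ≤ 2`, i.e. `μ = 0`.
-/

lemma one_div_intCast_le_one_div {n m : ℤ} (hm : 0 < m) (hn : n ≤ 0 ∨ m ≤ n) :
    (1 : ℚ) / n ≤ 1 / m := by
  rcases hn with hn | hn
  · have hn0 : (1 : ℚ) / n ≤ 0 := one_div_nonpos.mpr (by exact_mod_cast hn)
    have hm0 : (0 : ℚ) < 1 / m := one_div_pos.mpr (by exact_mod_cast hm)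
    linarith
  · exact one_div_le_one_div_of_le (by exact_mod_cast hm) (by exact_mod_cast hn)

lemma eq_one_or_eq_one_or_eq_two_of_one_le_one_div_add_one_div {a b : ℤ}
    (h : 1 ≤ (1 : ℚ) / a + 1 / b) : a = 1 ∨ b = 1 ∨ a = 2 ∧ b = 2 := by
  by_contra! hne
  obtain ⟨ha, hb, hab⟩ := hne
  have ha2 : (1 : ℚ) / a ≤ 1 / 2 := one_div_intCast_le_one_div (m := 2) (by norm_num) (by omega)
  have hb2 : (1 : ℚ) / b ≤ 1 / 2 := one_div_intCast_le_one_div (m := 2) (by norm_num) (by omega)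
  by_cases ha' : a = 2
  · have hb3 : (1 : ℚ) / b ≤ 1 / 3 :=
      one_div_intCast_le_one_div (m := 3) (by norm_num) (by have := hab ha'; omega)
    linarith
  · have ha3 : (1 : ℚ) / a ≤ 1 / 3 := one_div_intCast_le_one_div (m := 3) (by norm_num) (by omega)
    linarith

lemma eq_one_of_one_le_one_div_add_one_div_add_one_div {c e d : ℤ} (hc : 5 ≤ c) (he : 5 ≤ e)
    (h : 1 ≤ (1 : ℚ) / c + 1 / e + 1 / d) : d = 1 := by
  by_contra hd
  have hc5 : (1 : ℚ) / c ≤ 1 / 5 := one_div_intCast_le_one_div (by norm_num) (Or.inr hc)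
  have he5 : (1 : ℚ) / e ≤ 1 / 5 := one_div_intCast_le_one_div (by norm_num) (Or.inr he)
  have hd2 : (1 : ℚ) / d ≤ 1 / 2 := one_div_intCast_le_one_div (m := 2) (by norm_num) (by omega)
  linarith

theorem stmt_7_general (μ l : ℤ)
    (hA : (1 : ℚ) / (|6 * μ - l| : ℤ) + 1 / (|6 * μ + l| : ℤ) ≥ 1)
    (hB : (1 : ℚ) / (|9 * μ + l| : ℤ) + 1 / (|2 * l| : ℤ) + 1 / (|9 * μ - l| : ℤ) ≥ 1) :
    μ = 0 := by
  by_contra hμ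
  rcases eq_one_or_eq_one_or_eq_two_of_one_le_one_div_add_one_div hA with h | h | ⟨h, h'⟩
  · have hc : 5 ≤ |9 * μ + l| := by rw [abs_eq_max_neg] at h ⊢; omega
    have he : 5 ≤ |2 * l| := by rw [abs_eq_max_neg] at h ⊢; omega
    have hd := eq_one_of_one_le_one_div_add_one_div_add_one_div hc he hB
    rw [abs_eq_max_neg] at h hd
    omega
  · have hc : 5 ≤ |9 * μ - l| := by rw [abs_eq_max_neg] at h ⊢; omega
    have he : 5 ≤ |2 * l| := by rw [abs_eq_max_neg] at h ⊢; omega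
    have hd := eq_one_of_one_le_one_div_add_one_div_add_one_div (d := |9 * μ + l|) hc he
      (by linarith)
    rw [abs_eq_max_neg] at h hd
    omega
  · rw [abs_eq_max_neg] at h h'
    omega

theorem stmt_7 (μ l : ℤ) (hcop : Int.gcd μ l = 1) (hl : l ≠ 0)
    (h1 : 6 * μ - l ≠ 0) (h2 : 6 * μ + l ≠ 0) (h3 : 9 * μ - l ≠ 0) (h4 : 9 * μ + l ≠ 0)
    (hA : (1 : ℚ) / (|6 * μ - l| : ℤ) + 1 / (|6 * μ + l| : ℤ) ≥ 1)
    (hB : (1 : ℚ) / (|9 * μ + l| : ℤ) + 1 / (|2 * l| : ℤ) + 1 / (|9 * μ - l| : ℤ) ≥ 1) :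
    μ = 0 :=
  stmt_7_general μ l hA hB
end

section
/- The matrices L^4 and R generate a finite-index subgroup of SL(2,ℤ). -/
open Matrix MatrixGroups ModularGroup Matrix.SpecialLinearGroup Subgroup

abbrev SL2 := Matrix.SpecialLinearGroup (Fin 2) ℤ
def Lm : SL2 := ⟨!![1,0;1,1], by norm_num [Matrix.det_fin_two_of]⟩
def Ti : SL2 := ⟨!![1,-1;0,1], by norm_num [Matrix.det_fin_two_of]⟩
def Nm : SL2 := ⟨!![-1,0;0,-1], by norm_num [Matrix.det_fin_two_of]⟩
def Sm : SL2 := ⟨!![0,-1;1,0], by norm_num [Matrix.det_fin_two_of]⟩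

lemma sl_val_mul (A B : SL2) : (A * B).1 = A.1 * B.1 := rfl
lemma sl_val_one : (1 : SL2).1 = 1 := rfl

def K : Subgroup SL2 := closure {T, Lm}

lemma hTmemK : T ∈ K := subset_closure (Or.inl rfl)
lemma hLmemK : Lm ∈ K := subset_closure (Or.inr rfl)
lemma hTiK : Ti ∈ K := by
  have h : T⁻¹ = Ti := inv_eq_of_mul_eq_one_right (Subtype.ext (by decide))
  exact h ▸ inv_mem hTmemK
lemma hSmK : Sm ∈ K := by
  have h : Sm = Lm * Ti * Lm := Subtype.ext (by decide)
  rw [h]; exact mul_mem (mul_mem hLmemK hTiK) hLmemK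
lemma hNmK : Nm ∈ K := by
  have h : Nm = Sm * Sm := Subtype.ext (by decide)
  rw [h]; exact mul_mem hSmK hSmK

lemma coe_L_zpow (n : ℤ) : (Lm ^ n).1 = !![1,0;n,1] := by
  induction n using Int.induction_on with
  | zero => rw [zpow_zero, sl_val_one, Matrix.one_fin_two]
  | succ n h =>
    rw [_root_.zpow_add, zpow_one, sl_val_mul, h]
    show (!![1,0;(n:ℤ),1] : Matrix (Fin 2) (Fin 2) ℤ) * Lm.1 = _
    rw [show (Lm.1 : Matrix (Fin 2) (Fin 2) ℤ) = !![1,0;1,1] from rfl, Matrix.mul_fin_two]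
    norm_num
  | pred n h =>
    rw [_root_.zpow_sub, zpow_one, sl_val_mul, h]
    have : ((Lm⁻¹ : SL2) : Matrix (Fin 2) (Fin 2) ℤ) = !![1,0;-1,1] := by
      have : Lm⁻¹ = (⟨!![1,0;-1,1], by norm_num [Matrix.det_fin_two_of]⟩ : SL2) :=
        inv_eq_of_mul_eq_one_right (Subtype.ext (by decide))
      rw [this]
    rw [this, Matrix.mul_fin_two]
    norm_num; ring_nf

lemma emod_lt_abs (a : ℤ) {c : ℤ} (hc : c ≠ 0) : a % c < |c| := by
  rcases lt_or_gt_of_ne hc with h | h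
  · rw [abs_of_neg h, ← Int.emod_neg]; exact Int.emod_lt_of_pos a (by omega)
  · rw [abs_of_pos h]; exact Int.emod_lt_of_pos a h


lemma mem_K (g : SL2) : g ∈ K := by
  suffices h : ∀ n (g : SL2), (g.1 1 0).natAbs = n → g ∈ K from h _ g rfl
  intro n
  induction n using Nat.strong_induction_on with
  | _ n ih =>
    intro g hg
    have heta : g.1 = !![g.1 0 0, g.1 0 1; g.1 1 0, g.1 1 1] := Matrix.eta_fin_two g.1
    set a := g.1 0 0 with ha
    set b := g.1 0 1 with hb
    set c := g.1 1 0 with hc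
    set d := g.1 1 1 with hd
    have hdet : a * d - b * c = 1 := by
      have h2 := g.2
      rw [Matrix.det_fin_two] at h2
      exact h2
    by_cases hc0 : c = 0
    · have had : a * d = 1 := by rw [hc0] at hdet; simpa using hdet
      rcases Int.eq_one_or_neg_one_of_mul_eq_one' had with ⟨ha1, hd1⟩ | ⟨ha1, hd1⟩
      · have hge : g = T ^ b := by
          apply Subtype.ext
          rw [coe_T_zpow, heta, ha1, hd1, hc0]
        rw [hge]; exact zpow_mem hTmemK b
      · have hge : g = Nm * T ^ (-b) := by
          apply Subtype.ext
          rw [sl_val_mul, coe_T_zpow,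
            show (Nm.1 : Matrix (Fin 2) (Fin 2) ℤ) = !![-1,0;0,-1] from rfl,
            Matrix.mul_fin_two, heta, ha1, hd1, hc0]
          norm_num
        rw [hge]; exact mul_mem hNmK (zpow_mem hTmemK _)
    · set q := a / c with hq
      set r := a % c with hr
      have hrd : r = a - c * q := by rw [hr, hq, Int.emod_def]
      have hr0le : 0 ≤ r := Int.emod_nonneg a hc0
      have hrlt : r < |c| := emod_lt_abs a hc0
      have hg'coe : (T ^ (-q) * g).1 = !![r, b + (-q) * d; c, d] := by
        rw [sl_val_mul, coe_T_zpow, heta, Matrix.mul_fin_two]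
        have e1 : 1 * a + (-q) * c = r := by rw [hrd]; ring
        have e2 : 1 * b + (-q) * d = b + (-q) * d := by ring
        have e3 : 0 * a + 1 * c = c := by ring
        have e4 : 0 * b + 1 * d = d := by ring
        rw [e1, e2, e3, e4]
      have hgK : (T ^ (-q) * g) ∈ K → g ∈ K := by
        intro hm
        have : g = T ^ q * (T ^ (-q) * g) := by
          rw [← mul_assoc, ← _root_.zpow_add, add_neg_cancel, zpow_zero, one_mul]
        rw [this]; exact mul_mem (zpow_mem hTmemK q) hm
      by_cases hr0 : r = 0
      · have hdet' : r * d - (b + (-q) * d) * c = 1 := by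
          have : r * d - (b + (-q) * d) * c = a * d - b * c := by rw [hrd]; ring
          rw [this]; exact hdet
        have hbc : c * (-(b + (-q) * d)) = 1 := by rw [hr0] at hdet'; linarith
        have hcu : c = 1 ∨ c = -1 := Int.isUnit_iff.mp (IsUnit.of_mul_eq_one _ hbc)
        have hbval : b + (-q) * d = -c := by
          rcases hcu with h1 | h1 <;> rw [h1] at hbc ⊢ <;> linarith
        apply hgK
        rcases hcu with h1 | h1
        · have hge : T ^ (-q) * g = Sm * T ^ d := by
            apply Subtype.ext
            rw [hg'coe, sl_val_mul, coe_T_zpow, hbval, hr0, h1,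
              show (Sm.1 : Matrix (Fin 2) (Fin 2) ℤ) = !![0,-1;1,0] from rfl,
              Matrix.mul_fin_two]
            norm_num
          rw [hge]; exact mul_mem hSmK (zpow_mem hTmemK d)
        · have hge : T ^ (-q) * g = Nm * Sm * T ^ (-d) := by
            apply Subtype.ext
            rw [hg'coe, sl_val_mul, sl_val_mul, coe_T_zpow,
              hbval, hr0, h1,
              show (Nm.1 : Matrix (Fin 2) (Fin 2) ℤ) = !![-1,0;0,-1] from rfl,
              show (Sm.1 : Matrix (Fin 2) (Fin 2) ℤ) = !![0,-1;1,0] from rfl,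
              Matrix.mul_fin_two, Matrix.mul_fin_two]
            norm_num
          rw [hge]; exact mul_mem (mul_mem hNmK hSmK) (zpow_mem hTmemK _)
      · set j := c / r with hj
        set s := c % r with hs
        have hsd : s = c - r * j := by rw [hs, hj, Int.emod_def]
        have hs0le : 0 ≤ s := Int.emod_nonneg c hr0
        have hslt : s < |r| := emod_lt_abs c hr0
        have habs : |r| = r := abs_of_nonneg hr0le
        have hg''coe : (Lm ^ (-j) * (T ^ (-q) * g)).1 = !![r, b + (-q) * d; s, (-j) * (b + (-q) * d) + d] := by
          rw [sl_val_mul, coe_L_zpow, hg'coe, Matrix.mul_fin_two]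
          have e1 : 1 * r + 0 * c = r := by ring
          have e2 : 1 * (b + (-q) * d) + 0 * d = b + (-q) * d := by ring
          have e3 : (-j) * r + 1 * c = s := by rw [hsd]; ring
          have e4 : (-j) * (b + (-q) * d) + 1 * d = (-j) * (b + (-q) * d) + d := by ring
          rw [e1, e2, e3, e4]
        have hlt : ((Lm ^ (-j) * (T ^ (-q) * g)).1 1 0).natAbs < n := by
          rw [hg''coe]
          show (s : ℤ).natAbs < n
          rw [← hg]
          rw [habs] at hslt
          rw [Int.abs_eq_natAbs] at hrlt
          omega
        have hm := ih _ hlt _ rfl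
        apply hgK
        have : T ^ (-q) * g = Lm ^ j * (Lm ^ (-j) * (T ^ (-q) * g)) := by
          rw [← mul_assoc, ← _root_.zpow_add, add_neg_cancel, zpow_zero, one_mul]
        rw [this]; exact mul_mem (zpow_mem hLmemK j) hm

lemma K_eq_top : K = ⊤ := top_unique fun g _ => mem_K g

def Hgp : Subgroup SL2 := Subgroup.closure {Lm ^ 4, T}

def Am : SL2 := ⟨!![1,0;4,1], by norm_num [Matrix.det_fin_two_of]⟩
def Aim : SL2 := ⟨!![1,0;-4,1], by norm_num [Matrix.det_fin_two_of]⟩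

lemma hTH : T ∈ Hgp := Subgroup.subset_closure (Or.inr rfl)
lemma hAmH : Am ∈ Hgp := by
  have h : Am = Lm ^ 4 := by ext i j; fin_cases i <;> fin_cases j <;> decide
  rw [h]; exact Subgroup.subset_closure (Or.inl rfl)
lemma hTiH : Ti ∈ Hgp := by
  have h : T⁻¹ = Ti := inv_eq_of_mul_eq_one_right (by ext i j; fin_cases i <;> fin_cases j <;> decide)
  exact h ▸ inv_mem hTH
lemma hAimH : Aim ∈ Hgp := by
  have h : Am⁻¹ = Aim := inv_eq_of_mul_eq_one_right (by ext i j; fin_cases i <;> fin_cases j <;> decide)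
  exact h ▸ inv_mem hAmH

def rp : Fin 12 → SL2 := ![⟨!![1,0;0,1], by norm_num [Matrix.det_fin_two_of]⟩, ⟨!![1,0;1,1], by norm_num [Matrix.det_fin_two_of]⟩, ⟨!![2,1;1,1], by norm_num [Matrix.det_fin_two_of]⟩, ⟨!![1,0;2,1], by norm_num [Matrix.det_fin_two_of]⟩, ⟨!![3,2;1,1], by norm_num [Matrix.det_fin_two_of]⟩, ⟨!![2,1;3,2], by norm_num [Matrix.det_fin_two_of]⟩, ⟨!![3,1;2,1], by norm_num [Matrix.det_fin_two_of]⟩, ⟨!![1,0;3,1], by norm_num [Matrix.det_fin_two_of]⟩, ⟨!![4,3;1,1], by norm_num [Matrix.det_fin_two_of]⟩, ⟨!![3,2;4,3], by norm_num [Matrix.det_fin_two_of]⟩, ⟨!![4,1;3,1], by norm_num [Matrix.det_fin_two_of]⟩, ⟨!![3,2;7,5], by norm_num [Matrix.det_fin_two_of]⟩]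

lemma step {x g ri rj w : SL2} (hw : w ∈ Hgp) (he : x * ri = rj * w)
    (hg : ri⁻¹ * g ∈ Hgp) : rj⁻¹ * (x * g) ∈ Hgp := by
  have hx : x = rj * w * ri⁻¹ := by rw [← he, mul_inv_cancel_right]
  have he2 : rj⁻¹ * (x * g) = w * (ri⁻¹ * g) := by rw [hx]; group
  exact he2 ▸ mul_mem hw hg

lemma stepInv {x g ri rj w : SL2} (hw : w ∈ Hgp) (he : x * rj = ri * w)
    (hg : ri⁻¹ * g ∈ Hgp) : rj⁻¹ * (x⁻¹ * g) ∈ Hgp := by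
  have hx : x = ri * w * rj⁻¹ := by rw [← he, mul_inv_cancel_right]
  have he2 : rj⁻¹ * (x⁻¹ * g) = w⁻¹ * (ri⁻¹ * g) := by rw [hx]; group
  exact he2 ▸ mul_mem (inv_mem hw) hg

lemma exists_rep (g : SL2) : ∃ i : Fin 12, (rp i)⁻¹ * g ∈ Hgp := by
  have hg : g ∈ K := mem_K g
  induction hg using Subgroup.closure_induction_left with
  | one =>
    refine ⟨0, ?_⟩
    have h1 : rp 0 = 1 := by ext i j; fin_cases i <;> fin_cases j <;> decide
    rw [h1]; simpa using one_mem Hgp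
  | mul_left x hx y hy ih =>
    obtain ⟨i, hi⟩ := ih
    rcases hx with rfl | rfl
    · fin_cases i
      · exact ⟨0, step hTH (by ext i j; fin_cases i <;> fin_cases j <;> decide) hi⟩
      · exact ⟨2, step (one_mem Hgp) (by ext i j; fin_cases i <;> fin_cases j <;> decide) hi⟩
      · exact ⟨4, step (one_mem Hgp) (by ext i j; fin_cases i <;> fin_cases j <;> decide) hi⟩
      · exact ⟨6, step (one_mem Hgp) (by ext i j; fin_cases i <;> fin_cases j <;> decide) hi⟩
      · exact ⟨8, step (one_mem Hgp) (by ext i j; fin_cases i <;> fin_cases j <;> decide) hi⟩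
      · exact ⟨7, step (mul_mem (mul_mem (mul_mem (mul_mem (mul_mem hAimH hTH) hAimH) hTH) hAimH) hTH) (by ext i j; fin_cases i <;> fin_cases j <;> decide) hi⟩
      · exact ⟨3, step (mul_mem (mul_mem (mul_mem hTiH hAmH) hTiH) hAmH) (by ext i j; fin_cases i <;> fin_cases j <;> decide) hi⟩
      · exact ⟨10, step (one_mem Hgp) (by ext i j; fin_cases i <;> fin_cases j <;> decide) hi⟩
      · exact ⟨1, step (mul_mem (mul_mem hTiH hAimH) hTH) (by ext i j; fin_cases i <;> fin_cases j <;> decide) hi⟩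
      · exact ⟨9, step (mul_mem (mul_mem (mul_mem (mul_mem hTiH hAmH) hTH) hAimH) hTH) (by ext i j; fin_cases i <;> fin_cases j <;> decide) hi⟩
      · exact ⟨11, step (mul_mem (mul_mem (mul_mem (mul_mem (mul_mem hTiH hAmH) hTiH) hTiH) hTiH) hAmH) (by ext i j; fin_cases i <;> fin_cases j <;> decide) hi⟩
      · exact ⟨5, step (mul_mem (mul_mem (mul_mem (mul_mem hTiH hAmH) hTH) hAimH) hTH) (by ext i j; fin_cases i <;> fin_cases j <;> decide) hi⟩
    · fin_cases i
      · exact ⟨1, step (one_mem Hgp) (by ext i j; fin_cases i <;> fin_cases j <;> decide) hi⟩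
      · exact ⟨3, step (one_mem Hgp) (by ext i j; fin_cases i <;> fin_cases j <;> decide) hi⟩
      · exact ⟨5, step (one_mem Hgp) (by ext i j; fin_cases i <;> fin_cases j <;> decide) hi⟩
      · exact ⟨7, step (one_mem Hgp) (by ext i j; fin_cases i <;> fin_cases j <;> decide) hi⟩
      · exact ⟨9, step (one_mem Hgp) (by ext i j; fin_cases i <;> fin_cases j <;> decide) hi⟩
      · exact ⟨2, step (mul_mem (mul_mem (mul_mem hAimH hTH) hAimH) hTH) (by ext i j; fin_cases i <;> fin_cases j <;> decide) hi⟩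
      · exact ⟨4, step (mul_mem (mul_mem (mul_mem (mul_mem (mul_mem hTiH hAmH) hTiH) hAmH) hTiH) hAmH) (by ext i j; fin_cases i <;> fin_cases j <;> decide) hi⟩
      · exact ⟨0, step hAmH (by ext i j; fin_cases i <;> fin_cases j <;> decide) hi⟩
      · exact ⟨8, step (mul_mem (mul_mem (mul_mem (mul_mem hTiH hAmH) hTiH) hAimH) hTH) (by ext i j; fin_cases i <;> fin_cases j <;> decide) hi⟩
      · exact ⟨11, step (one_mem Hgp) (by ext i j; fin_cases i <;> fin_cases j <;> decide) hi⟩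
      · exact ⟨10, step (mul_mem (mul_mem hAimH hTiH) hAmH) (by ext i j; fin_cases i <;> fin_cases j <;> decide) hi⟩
      · exact ⟨6, step (mul_mem (mul_mem (mul_mem (mul_mem hAimH hTH) hTH) hAimH) hTH) (by ext i j; fin_cases i <;> fin_cases j <;> decide) hi⟩
  | inv_mul_cancel x hx y hy ih =>
    obtain ⟨i, hi⟩ := ih
    rcases hx with rfl | rfl
    · fin_cases i
      · exact ⟨0, stepInv hTH (by ext i j; fin_cases i <;> fin_cases j <;> decide) hi⟩
      · exact ⟨8, stepInv (mul_mem (mul_mem hTiH hAimH) hTH) (by ext i j; fin_cases i <;> fin_cases j <;> decide) hi⟩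
      · exact ⟨1, stepInv (one_mem Hgp) (by ext i j; fin_cases i <;> fin_cases j <;> decide) hi⟩
      · exact ⟨6, stepInv (mul_mem (mul_mem (mul_mem hTiH hAmH) hTiH) hAmH) (by ext i j; fin_cases i <;> fin_cases j <;> decide) hi⟩
      · exact ⟨2, stepInv (one_mem Hgp) (by ext i j; fin_cases i <;> fin_cases j <;> decide) hi⟩
      · exact ⟨11, stepInv (mul_mem (mul_mem (mul_mem (mul_mem hTiH hAmH) hTH) hAimH) hTH) (by ext i j; fin_cases i <;> fin_cases j <;> decide) hi⟩
      · exact ⟨3, stepInv (one_mem Hgp) (by ext i j; fin_cases i <;> fin_cases j <;> decide) hi⟩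
      · exact ⟨5, stepInv (mul_mem (mul_mem (mul_mem (mul_mem (mul_mem hAimH hTH) hAimH) hTH) hAimH) hTH) (by ext i j; fin_cases i <;> fin_cases j <;> decide) hi⟩
      · exact ⟨4, stepInv (one_mem Hgp) (by ext i j; fin_cases i <;> fin_cases j <;> decide) hi⟩
      · exact ⟨9, stepInv (mul_mem (mul_mem (mul_mem (mul_mem hTiH hAmH) hTH) hAimH) hTH) (by ext i j; fin_cases i <;> fin_cases j <;> decide) hi⟩
      · exact ⟨7, stepInv (one_mem Hgp) (by ext i j; fin_cases i <;> fin_cases j <;> decide) hi⟩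
      · exact ⟨10, stepInv (mul_mem (mul_mem (mul_mem (mul_mem (mul_mem hTiH hAmH) hTiH) hTiH) hTiH) hAmH) (by ext i j; fin_cases i <;> fin_cases j <;> decide) hi⟩
    · fin_cases i
      · exact ⟨7, stepInv hAmH (by ext i j; fin_cases i <;> fin_cases j <;> decide) hi⟩
      · exact ⟨0, stepInv (one_mem Hgp) (by ext i j; fin_cases i <;> fin_cases j <;> decide) hi⟩
      · exact ⟨5, stepInv (mul_mem (mul_mem (mul_mem hAimH hTH) hAimH) hTH) (by ext i j; fin_cases i <;> fin_cases j <;> decide) hi⟩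
      · exact ⟨1, stepInv (one_mem Hgp) (by ext i j; fin_cases i <;> fin_cases j <;> decide) hi⟩
      · exact ⟨6, stepInv (mul_mem (mul_mem (mul_mem (mul_mem (mul_mem hTiH hAmH) hTiH) hAmH) hTiH) hAmH) (by ext i j; fin_cases i <;> fin_cases j <;> decide) hi⟩
      · exact ⟨2, stepInv (one_mem Hgp) (by ext i j; fin_cases i <;> fin_cases j <;> decide) hi⟩
      · exact ⟨11, stepInv (mul_mem (mul_mem (mul_mem (mul_mem hAimH hTH) hTH) hAimH) hTH) (by ext i j; fin_cases i <;> fin_cases j <;> decide) hi⟩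
      · exact ⟨3, stepInv (one_mem Hgp) (by ext i j; fin_cases i <;> fin_cases j <;> decide) hi⟩
      · exact ⟨8, stepInv (mul_mem (mul_mem (mul_mem (mul_mem hTiH hAmH) hTiH) hAimH) hTH) (by ext i j; fin_cases i <;> fin_cases j <;> decide) hi⟩
      · exact ⟨4, stepInv (one_mem Hgp) (by ext i j; fin_cases i <;> fin_cases j <;> decide) hi⟩
      · exact ⟨10, stepInv (mul_mem (mul_mem hAimH hTiH) hAmH) (by ext i j; fin_cases i <;> fin_cases j <;> decide) hi⟩
      · exact ⟨9, stepInv (one_mem Hgp) (by ext i j; fin_cases i <;> fin_cases j <;> decide) hi⟩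

theorem Hgp_finiteIndex : Hgp.FiniteIndex := by
  have hsurj : Function.Surjective
      (fun i : Fin 12 => (QuotientGroup.mk (rp i) : SL2 ⧸ Hgp)) := by
    intro q
    obtain ⟨g, rfl⟩ := QuotientGroup.mk_surjective q
    obtain ⟨i, hi⟩ := exists_rep g
    exact ⟨i, (QuotientGroup.eq).mpr hi⟩
  haveI : Finite (SL2 ⧸ Hgp) := Finite.of_surjective _ hsurj
  exact Subgroup.finiteIndex_of_finite_quotient

theorem stmt_18 (R L : Matrix.SpecialLinearGroup (Fin 2) ℤ)
    (hR : (R : Matrix (Fin 2) (Fin 2) ℤ) = !![1,1;0,1])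
    (hL : (L : Matrix (Fin 2) (Fin 2) ℤ) = !![1,0;1,1]) :
    (Subgroup.closure ({L ^ 4, R} : Set (Matrix.SpecialLinearGroup (Fin 2) ℤ))).FiniteIndex := by
  have hR' : R = T := Subtype.ext (by rw [hR]; rfl)
  have hL' : L = Lm := Subtype.ext (by rw [hL]; rfl)
  rw [hR', hL']
  exact Hgp_finiteIndex
end
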